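/- arXiv:2502.11222 — 2 statements merged into one kernel-verified Lean document; each statement's English description precedes it below -/
import Mathlib

section
/- The element 23 + 4√33 is a totally positive unit in the ring of integers of ℚ(√33), and it is not a square in ℚ₂ (under either embedding of ℚ(√33) into ℚ₂); in particular it is not a square in the ring of integers of any totally real number field containing it that embeds into ℚ₂. -/
/-!
The conjugates `23 ± 4√33` are positive algebraic integers with product `23² - 16 * 33 = 1`.
A square root `s` of `33` in `ℚ₂` is a 2-adic integer, so `23 + 4s ≡ 3 mod 4`. A square that is
`≡ 3 mod 4` is the square of a 2-adic unit `y`, and a 2-adic unit is `≡ 1 mod 2`, so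
`y² - 1 = (y - 1)(y + 1) ≡ 0 mod 4`: a contradiction.
-/

theorem isIntegral_sqrt_natCast (n : ℕ) : IsIntegral ℤ (√n : ℝ) :=
  IsIntegral.of_pow two_pos <| by
    rw [Real.sq_sqrt n.cast_nonneg]
    exact isIntegral_natCast n

theorem norm_eq_one_of_sq_eq {K : Type*} [NormedDivisionRing K] {x u : K} (h : x ^ 2 = u)
    (hu : ‖u‖ = 1) : ‖x‖ = 1 := by
  rw [← pow_eq_one_iff_of_nonneg (norm_nonneg x) two_ne_zero, ← norm_pow, h, hu]

namespace Padic

theorem norm_le_one_of_sq_eq_natCast {p : ℕ} [Fact p.Prime] {x : ℚ_[p]} {n : ℕ}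
    (h : x ^ 2 = n) : ‖x‖ ≤ 1 := by
  rw [← pow_le_one_iff_of_nonneg (norm_nonneg x) two_ne_zero, ← norm_pow, h]
  exact_mod_cast norm_int_le_one (p := p) n

theorem norm_two : ‖(2 : ℚ_[2])‖ = 2⁻¹ := by
  simpa using norm_p (p := 2)

theorem norm_three : ‖(3 : ℚ_[2])‖ = 1 := by
  simpa using (norm_natCast_eq_one_iff (p := 2) (n := 3)).2 (by norm_num)

theorem norm_sub_one_le_half_of_norm_eq_one {y : ℚ_[2]} (hy : ‖y‖ = 1) : ‖y - 1‖ ≤ 2⁻¹ := by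
  obtain ⟨n, hn, hyn⟩ := PadicInt.exists_mem_range (⟨y, hy.le⟩ : ℤ_[2])
  rw [IsLocalRing.mem_maximalIdeal, PadicInt.mem_nonunits] at hyn
  replace hyn : ‖y - n‖ < 1 := hyn
  interval_cases n
  · simp [hy] at hyn
  · convert (norm_lt_pow_iff_norm_le_pow_sub_one (y - 1) 0).1 (by simpa using hyn) using 1
    norm_num

theorem norm_sq_sub_one_le_quarter {y : ℚ_[2]} (hy : ‖y‖ = 1) : ‖y ^ 2 - 1‖ ≤ 4⁻¹ := by
  have hsub := norm_sub_one_le_half_of_norm_eq_one hy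
  have hadd : ‖y + 1‖ ≤ 2⁻¹ :=
    calc ‖y + 1‖ = ‖(y - 1) + 2‖ := by ring_nf
      _ ≤ max ‖y - 1‖ ‖(2 : ℚ_[2])‖ := IsUltrametricDist.norm_add_le_max _ _
      _ ≤ 2⁻¹ := max_le hsub norm_two.le
  calc ‖y ^ 2 - 1‖ = ‖y - 1‖ * ‖y + 1‖ := by rw [← norm_mul]; ring_nf
    _ ≤ 2⁻¹ * 2⁻¹ := mul_le_mul hsub hadd (norm_nonneg _) (by norm_num)
    _ = 4⁻¹ := by norm_num

theorem not_isSquare_of_norm_sub_three_le {u : ℚ_[2]} (hu : ‖u - 3‖ ≤ 4⁻¹) : ¬IsSquare u := by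
  rintro ⟨y, rfl⟩
  have hy : ‖y‖ = 1 := by
    refine norm_eq_one_of_sq_eq (sq y) ?_
    rw [norm_eq_of_norm_sub_lt_right (hu.trans_lt (by rw [norm_three]; norm_num)), norm_three]
  have h2 : ‖(2 : ℚ_[2])‖ ≤ 4⁻¹ :=
    calc ‖(2 : ℚ_[2])‖ = ‖(y ^ 2 - 1) + (3 - y * y)‖ := by ring_nf
      _ ≤ max ‖y ^ 2 - 1‖ ‖3 - y * y‖ := IsUltrametricDist.norm_add_le_max _ _
      _ ≤ 4⁻¹ := max_le (norm_sq_sub_one_le_quarter hy) (by rwa [norm_sub_rev])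
  rw [norm_two] at h2
  norm_num at h2

theorem norm_twentythree_add_four_mul_sub_three_le {s : ℚ_[2]} (hs : ‖s‖ ≤ 1) :
    ‖23 + 4 * s - 3‖ ≤ 4⁻¹ := by
  have h5 : ‖(5 : ℚ_[2]) + s‖ ≤ 1 :=
    (IsUltrametricDist.norm_add_le_max _ _).trans
      (max_le (by exact_mod_cast norm_int_le_one (p := 2) 5) hs)
  calc ‖23 + 4 * s - 3‖ = ‖(2 : ℚ_[2])‖ ^ 2 * ‖5 + s‖ := by
        rw [← norm_pow, ← norm_mul]; ring_nf
    _ ≤ 4⁻¹ := by rw [norm_two]; nlinarith [norm_nonneg ((5 : ℚ_[2]) + s)]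

theorem not_isSquare_twentythree_add_four_mul {s : ℚ_[2]} (hs : s ^ 2 = 33) :
    ¬IsSquare (23 + 4 * s) :=
  not_isSquare_of_norm_sub_three_le <| norm_twentythree_add_four_mul_sub_three_le <|
    norm_le_one_of_sq_eq_natCast (n := 33) (by exact_mod_cast hs)

end Padic

/-- `23 + 4√33` is a totally positive unit in the ring of integers of `ℚ(√33)`
(both real conjugates `23 ± 4√33` are positive, both are algebraic integers,
and their product is `1`), and it is not a square in `ℚ₂` under either
embedding (i.e. for either 2-adic square root `s` of `33`, `23 + 4s` is not a
square in `ℚ₂`); in particular it is not a square in the ring of integers of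
any totally real number field containing it that embeds into `ℚ₂`. -/
theorem twentythree_add_four_sqrt33_totally_positive_unit_not_square_in_Qp2 :
    (0 < 23 + 4 * Real.sqrt 33) ∧ (0 < 23 - 4 * Real.sqrt 33) ∧
      IsIntegral ℤ (23 + 4 * Real.sqrt 33) ∧ IsIntegral ℤ (23 - 4 * Real.sqrt 33) ∧
      (23 + 4 * Real.sqrt 33) * (23 - 4 * Real.sqrt 33) = 1 ∧
      (∀ s : ℚ_[2], s ^ 2 = 33 → ¬∃ y : ℚ_[2], 23 + 4 * s = y ^ 2) ∧
      (∀ s : ℚ_[2], s ^ 2 = 33 → ¬∃ y : ℚ_[2], IsIntegral ℤ y ∧ 23 + 4 * s = y ^ 2) := by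
  have hsq : Real.sqrt 33 ^ 2 = 33 := Real.sq_sqrt (by norm_num)
  have hsqrt : IsIntegral ℤ (Real.sqrt 33) := by exact_mod_cast isIntegral_sqrt_natCast 33
  have h23 : IsIntegral ℤ (23 : ℝ) := by exact_mod_cast isIntegral_natCast (R := ℤ) (B := ℝ) 23
  have h4 : IsIntegral ℤ (4 : ℝ) := by exact_mod_cast isIntegral_natCast (R := ℤ) (B := ℝ) 4
  refine ⟨by positivity, by nlinarith [Real.sqrt_nonneg 33], h23.add (h4.mul hsqrt),
    h23.sub (h4.mul hsqrt), by linear_combination (-16) * hsq, ?_, ?_⟩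
  · exact fun s hs ⟨y, hy⟩ => Padic.not_isSquare_twentythree_add_four_mul hs ⟨y, hy.trans (sq y)⟩
  · exact fun s hs ⟨y, _, hy⟩ =>
      Padic.not_isSquare_twentythree_add_four_mul hs ⟨y, hy.trans (sq y)⟩
end

section
/- Let K⁺ be the maximal totally real subfield of ℚ₂ and O its ring of integers. Then every sum of seven squares in O is a sum of at most six squares in O; consequently 4 ≤ P(O) ≤ 6. -/
open Polynomial Finset

/-- An element of a ℚ-algebra is totally real if it is algebraic over ℚ and all
complex roots of its minimal polynomial are real. -/
def TotallyReal {A : Type*} [Field A] [Algebra ℚ A] (x : A) : Prop :=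
  IsAlgebraic ℚ x ∧ ∀ z : ℂ, Polynomial.aeval z (minpoly ℚ x) = 0 → z.im = 0

/-- `x` is a sum of `n` squares of elements of the subset `S`. -/
def IsSumOfSquaresIn {R : Type*} [CommRing R] (S : Set R) (n : ℕ) (x : R) : Prop :=
  ∃ f : Fin n → R, (∀ i, f i ∈ S) ∧ x = ∑ i, (f i) ^ 2

/-- The Pythagoras number of the set `S`: the least `n` with Σⁿ S² = Σⁿ⁺¹ S². -/
noncomputable def pythagorasNumberOf {R : Type*} [CommRing R] (S : Set R) : ℕ∞ :=
  sInf ((fun n : ℕ => (n : ℕ∞)) ''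
    {n | ∀ x, IsSumOfSquaresIn S n x ↔ IsSumOfSquaresIn S (n + 1) x})

/-!
Lift the summands to `ℤ₂`. Among any seven `2`-adic integers, at least two have a sum of squares
that is a square in `ℤ₂`: after halving all of them often enough one is odd, and then either a
sub-sum of squares is `1 mod 8`, or all seven are odd and the Erdős–Ginzburg–Ziv theorem picks
four whose squares sum to `4 mod 32`; by Hensel's lemma both are squares. A square root `r` of
such a sub-sum is an algebraic integer, and every conjugate of `r` squares to a sum of squares of
real numbers, so `r` is again totally real; replacing the sub-sum by `r²` saves a square.
For the lower bound, once `Σⁿ = Σⁿ⁺¹` the sums of squares are stable, whereas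
`7 = 2² + 1² + 1² + 1²` is not a sum of three squares even modulo `8`.
-/

theorem Complex.im_eq_zero_of_sq_eq_ofReal {z : ℂ} {a : ℝ} (ha : 0 ≤ a) (h : z ^ 2 = a) :
    z.im = 0 := by
  have hre : z.re ^ 2 - z.im ^ 2 = a := by simpa [sq] using congrArg re h
  have him : z.re = 0 ∨ z.im = 0 := by simpa [sq, mul_comm z.im] using congrArg im h
  rcases him with h' | h'
  · nlinarith
  · exact h'

theorem totallyReal_algebraMap {A : Type*} [Field A] [Algebra ℚ A] (q : ℚ) :
    TotallyReal (algebraMap ℚ A q) := by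
  refine ⟨isAlgebraic_algebraMap q, fun z hz => ?_⟩
  rw [minpoly.eq_X_sub_C, map_sub, aeval_X, aeval_C, sub_eq_zero] at hz
  simp [hz]

/-- Stated for the canonical `ℚ`-algebra structure of a field of characteristic zero: for it, the
`ℚ`-algebra structure of the intermediate field `E` below is definitionally the canonical one of
the field `E`, which is the one `minpoly ℚ (y i)` picks up. -/
theorem TotallyReal.of_sq_eq_sum_sq {A : Type*} [Field A] [CharZero A] {ι : Type*}
    (s : Finset ι) {x : ι → A} (hx : ∀ i ∈ s, TotallyReal (x i)) {r : A}
    (h : r ^ 2 = ∑ i ∈ s, x i ^ 2) : TotallyReal r := by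
  have hr : IsAlgebraic ℚ r := (IsIntegral.of_pow two_pos <|
    h ▸ IsIntegral.sum _ fun i hi => (hx i hi).1.isIntegral.pow 2).isAlgebraic
  refine ⟨hr, fun z hz => ?_⟩
  set E := IntermediateField.adjoin ℚ {a : A | IsAlgebraic ℚ a}
  have hE : ∀ {a : A}, IsAlgebraic ℚ a → a ∈ E := fun ha =>
    IntermediateField.subset_adjoin _ _ ha
  let y : s → E := fun i => ⟨x i, hE (hx i i.2).1⟩
  have hsq : (⟨r, hE hr⟩ : E) ^ 2 = ∑ i, y i ^ 2 :=
    Subtype.ext (by simp [y, h, ← sum_coe_sort s (fun i => x i ^ 2)])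
  obtain ⟨φ, hφ⟩ := IntermediateField.exists_algHom_adjoin_of_splits_of_aeval
    (fun a ha => ⟨(Set.mem_ofPred.1 ha).isIntegral, IsAlgClosed.splits _⟩) (hE hr) hz
  have hreal : ∀ i, ((φ (y i)).re : ℂ) = φ (y i) := fun i => by
    refine Complex.ext rfl ((hx i i.2).2 _ ?_).symm
    have h1 := minpoly.aeval_algHom (f := φ) (x := y i)
    rwa [IntermediateField.minpoly_eq] at h1
  refine Complex.im_eq_zero_of_sq_eq_ofReal (a := ∑ i, (φ (y i)).re ^ 2)
    (sum_nonneg fun i _ => sq_nonneg _) ?_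
  rw [← hφ, ← map_pow, hsq, map_sum]
  push_cast
  simp_rw [hreal, map_pow]

abbrev totallyRealIntegers (A : Type*) [Field A] [Algebra ℚ A] : Set A :=
  {y : A | TotallyReal y ∧ IsIntegral ℤ y}

section TotallyRealIntegers

variable {A : Type*} [Field A]

theorem natCast_mem_totallyRealIntegers [Algebra ℚ A] (n : ℕ) :
    (n : A) ∈ totallyRealIntegers A :=
  ⟨by simpa using totallyReal_algebraMap (A := A) n, isIntegral_natCast n⟩

theorem zero_mem_totallyRealIntegers [Algebra ℚ A] : (0 : A) ∈ totallyRealIntegers A := by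
  simpa using natCast_mem_totallyRealIntegers (A := A) 0

theorem mem_totallyRealIntegers_of_sq_eq_sum_sq [CharZero A] {ι : Type*} (s : Finset ι)
    {x : ι → A} (hx : ∀ i ∈ s, x i ∈ totallyRealIntegers A) {r : A}
    (h : r ^ 2 = ∑ i ∈ s, x i ^ 2) : r ∈ totallyRealIntegers A :=
  ⟨.of_sq_eq_sum_sq s (fun i hi => (hx i hi).1) h,
    IsIntegral.of_pow two_pos (h ▸ IsIntegral.sum _ fun i hi => (hx i hi).2.pow 2)⟩

end TotallyRealIntegers

namespace IsSumOfSquaresIn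

variable {R : Type*} [CommRing R] {S : Set R} {m n : ℕ} {x y : R}

theorem sq {r : R} (hr : r ∈ S) : IsSumOfSquaresIn S 1 (r ^ 2) :=
  ⟨fun _ => r, fun _ => hr, by simp⟩

theorem zero (h0 : (0 : R) ∈ S) : IsSumOfSquaresIn S n 0 :=
  ⟨0, fun _ => h0, by simp⟩

theorem add (hx : IsSumOfSquaresIn S m x) (hy : IsSumOfSquaresIn S n y) :
    IsSumOfSquaresIn S (m + n) (x + y) := by
  obtain ⟨f, hf, rfl⟩ := hx
  obtain ⟨g, hg, rfl⟩ := hy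
  exact ⟨Fin.append f g, Fin.addCases (by simpa using hf) (by simpa using hg),
    by simp [Fin.sum_univ_add]⟩

theorem mono (h0 : (0 : R) ∈ S) (hmn : m ≤ n) (hx : IsSumOfSquaresIn S m x) :
    IsSumOfSquaresIn S n x := by
  simpa [Nat.add_sub_cancel' hmn] using hx.add (zero (n := n - m) h0)

theorem finset_sum {ι : Type*} (s : Finset ι) {f : ι → R} (hf : ∀ i ∈ s, f i ∈ S) :
    IsSumOfSquaresIn S #s (∑ i ∈ s, f i ^ 2) := by
  refine ⟨fun k => f (s.equivFin.symm k), fun k => hf _ (s.equivFin.symm k).2, ?_⟩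
  rw [← sum_coe_sort s, ← s.equivFin.symm.sum_comp]

theorem exists_add_sq (hx : IsSumOfSquaresIn S (n + 1) x) :
    ∃ y r, IsSumOfSquaresIn S n y ∧ r ∈ S ∧ x = y + r ^ 2 := by
  obtain ⟨f, hf, rfl⟩ := hx
  exact ⟨_, _, ⟨fun i => f i.castSucc, fun i => hf _, rfl⟩, hf (Fin.last n),
    Fin.sum_univ_castSucc _⟩

theorem of_stable (hn : ∀ x, IsSumOfSquaresIn S n x ↔ IsSumOfSquaresIn S (n + 1) x)
    (hnm : n ≤ m) (hx : IsSumOfSquaresIn S m x) : IsSumOfSquaresIn S n x := by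
  induction m, hnm using Nat.le_induction generalizing x with
  | base => exact hx
  | succ m _ ih =>
    obtain ⟨y, r, hy, hr, rfl⟩ := hx.exists_add_sq
    exact (hn _).2 ((ih hy).add (sq hr))

end IsSumOfSquaresIn

theorem ZMod.exists_sum_eq_one_of_mem_zero_one_four {ι : Type*} [Fintype ι]
    (hι : 6 ≤ Fintype.card ι) (s : ι → ZMod 8) (hs : ∀ i, s i = 0 ∨ s i = 1 ∨ s i = 4)
    {i₀ : ι} (hi₀ : s i₀ = 1) :
    (∀ i, s i = 1) ∨ ∃ T : Finset ι, 2 ≤ #T ∧ ∑ i ∈ T, s i = 1 := by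
  classical
  by_cases hzero : ∃ j, s j = 0
  · obtain ⟨j, hj⟩ := hzero
    have hne : i₀ ≠ j := by rintro rfl; rw [hj] at hi₀; exact absurd hi₀ (by decide)
    exact .inr ⟨{i₀, j}, (card_pair hne).ge, by rw [sum_pair hne, hi₀, hj, add_zero]⟩
  have hs' : ∀ i, s i = 1 ∨ s i = 4 := fun i =>
    (hs i).resolve_left fun h => hzero ⟨i, h⟩
  set F := univ.filter (s · = 4)
  have hF : ∀ {i}, i ∈ F ↔ s i = 4 := by simp [F]
  have hFc : ∀ i ∉ F, s i = 1 := fun i hi => (hs' i).resolve_right (hF.not.1 hi)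
  by_cases hF2 : 2 ≤ #F
  · obtain ⟨j, hj, k, hk, hjk⟩ := one_lt_card.1 hF2
    have hne : ∀ {l}, l ∈ F → i₀ ≠ l := by
      rintro l hl rfl; rw [hF, hi₀] at hl; exact absurd hl (by decide)
    refine .inr ⟨{i₀, j, k}, ?_, ?_⟩
    · rw [card_insert_of_notMem (by simp [hne hj, hne hk]), card_pair hjk]; omega
    · rw [sum_insert (by simp [hne hj, hne hk]), sum_pair hjk, hi₀, hF.1 hj, hF.1 hk]
      decide
  rcases F.eq_empty_or_nonempty with hFe | ⟨j, hj⟩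
  · exact .inl fun i => hFc i (by simp [hFe])
  · obtain ⟨U, hU, hUcard⟩ := exists_subset_card_eq (s := Fᶜ) (n := 5) (by
      rw [card_compl]; omega)
    have hjU : j ∉ U := fun h => mem_compl.1 (hU h) hj
    refine .inr ⟨insert j U, by rw [card_insert_of_notMem hjU]; omega, ?_⟩
    rw [sum_insert hjU, hF.1 hj, sum_congr rfl fun i hi => hFc i (mem_compl.1 (hU hi)),
      sum_const, hUcard]
    decide

namespace PadicInt

variable {p : ℕ} [Fact p.Prime]

theorem exists_coe_eq_of_isIntegral {y : ℚ_[p]} (hy : IsIntegral ℤ y) :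
    ∃ b : ℤ_[p], (b : ℚ_[p]) = y :=
  IsIntegrallyClosed.isIntegral_iff.1 hy.tower_top

theorem toZModPow_eq_iff_two_pow_dvd_sub {n : ℕ} {x y : ℤ_[2]} :
    toZModPow n x = toZModPow n y ↔ (2 : ℤ_[2]) ^ n ∣ x - y := by
  rw [← RingHom.sub_mem_ker_iff, ker_toZModPow, Ideal.mem_span_singleton, Nat.cast_ofNat]

theorem isUnit_or_dvd (x : ℤ_[p]) : IsUnit x ∨ (p : ℤ_[p]) ∣ x := by
  rw [← norm_lt_one_iff_dvd, isUnit_iff]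
  exact (norm_le_one x).eq_or_lt

theorem isSquare_of_dvd_sub_one {w : ℤ_[2]} (hw : (2 : ℤ_[2]) ^ 3 ∣ w - 1) : IsSquare w := by
  obtain ⟨c, hc⟩ := hw
  have hnorm : ‖((X ^ 2 - C w : ℤ_[2][X]).eval 1)‖ <
      ‖((X ^ 2 - C w : ℤ_[2][X]).derivative.eval 1)‖ ^ 2 := by
    have h2 : ‖(2 : ℤ_[2])‖ = 2⁻¹ := by simpa using norm_p (p := 2)
    have hval : (X ^ 2 - C w : ℤ_[2][X]).eval 1 = -(2 ^ 3 * c) := by simp [← hc]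
    have hder : (X ^ 2 - C w : ℤ_[2][X]).derivative.eval 1 = 2 := by simp; norm_num
    rw [hval, hder, norm_neg, norm_mul, norm_pow, h2]
    nlinarith [norm_le_one c, norm_nonneg c]
  obtain ⟨z, hz, -⟩ := hensels_lemma hnorm
  exact ⟨z, by simpa [sub_eq_zero, sq, eq_comm] using hz⟩

theorem isSquare_of_dvd_sub_four {w : ℤ_[2]} (hw : (2 : ℤ_[2]) ^ 5 ∣ w - 4) : IsSquare w := by
  obtain ⟨c, hc⟩ := hw
  have hw' : w = 2 ^ 2 * (1 + 2 ^ 3 * c) := by linear_combination hc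
  rw [hw']
  exact (IsSquare.sq 2).mul (isSquare_of_dvd_sub_one ⟨c, by ring⟩)

theorem dvd_sq_sub_one_of_isUnit {b : ℤ_[2]} (hb : IsUnit b) :
    (2 : ℤ_[2]) ^ 3 ∣ b ^ 2 - 1 := by
  have hsq : ∀ u : (ZMod (2 ^ 3))ˣ, u ^ 2 = 1 := by decide
  obtain ⟨u, hu⟩ := hb.map (toZModPow 3)
  rw [← toZModPow_eq_iff_two_pow_dvd_sub, map_pow, ← hu, map_one, ← Units.val_pow_eq_pow_val,
    hsq, Units.val_one]

theorem toZModPow_sq_of_not_isUnit {b : ℤ_[2]} (hb : ¬IsUnit b) :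
    toZModPow 3 (b ^ 2) = 0 ∨ toZModPow 3 (b ^ 2) = 4 := by
  obtain ⟨c, rfl⟩ := (isUnit_or_dvd b).resolve_left hb
  have h : ∀ u : ZMod (2 ^ 3), 4 * u ^ 2 = 0 ∨ 4 * u ^ 2 = 4 := by decide
  have h4 : (2 : ZMod (2 ^ 3)) ^ 2 = 4 := by decide
  simpa [mul_pow, map_ofNat, h4] using h (toZModPow 3 c)

theorem sum_three_sq_ne_seven (a b c : ℤ_[2]) : a ^ 2 + b ^ 2 + c ^ 2 ≠ 7 := by
  have h : ∀ u v w : ZMod (2 ^ 3), u ^ 2 + v ^ 2 + w ^ 2 ≠ 7 := by decide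
  intro habc
  apply h (toZModPow 3 a) (toZModPow 3 b) (toZModPow 3 c)
  simpa [map_ofNat] using congrArg (toZModPow 3) habc

theorem exists_card_eq_four_isSquare_sum_sq {ι : Type*} [Fintype ι] (hι : 7 ≤ Fintype.card ι)
    (b : ι → ℤ_[2]) (hb : ∀ i, IsUnit (b i)) :
    ∃ T : Finset ι, #T = 4 ∧ IsSquare (∑ i ∈ T, b i ^ 2) := by
  choose c hc using fun i => dvd_sq_sub_one_of_isUnit (hb i)
  obtain ⟨T, -, hT, hsum⟩ :=
    ZMod.erdos_ginzburg_ziv (n := 4) (s := univ) (fun i => toZModPow 2 (c i)) (by simpa using hι)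
  have hdvd : (2 : ℤ_[2]) ^ 2 ∣ ∑ i ∈ T, c i := by
    rw [← sub_zero (∑ i ∈ T, c i), ← toZModPow_eq_iff_two_pow_dvd_sub, map_sum, map_zero]
    exact hsum
  refine ⟨T, hT, isSquare_of_dvd_sub_four ?_⟩
  have hsub : ∑ i ∈ T, b i ^ 2 - 4 = 2 ^ 3 * ∑ i ∈ T, c i := by
    rw [mul_sum, ← sum_congr rfl fun i _ => hc i, sum_sub_distrib, sum_const, hT]
    norm_num
  rw [hsub, show (2 : ℤ_[2]) ^ 5 = 2 ^ 3 * 2 ^ 2 by norm_num]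
  exact mul_dvd_mul_left _ hdvd

theorem toZModPow_sq_eq_one_iff {b : ℤ_[2]} : toZModPow 3 (b ^ 2) = 1 ↔ IsUnit b := by
  refine ⟨fun h => ?_, fun hb => ?_⟩
  · by_contra hb
    have h04 := toZModPow_sq_of_not_isUnit hb
    rw [h] at h04
    exact absurd h04 (by decide)
  · rw [← map_one (toZModPow 3), toZModPow_eq_iff_two_pow_dvd_sub]
    exact dvd_sq_sub_one_of_isUnit hb

theorem exists_isSquare_sum_sq_of_isUnit {ι : Type*} [Fintype ι] (hι : 7 ≤ Fintype.card ι)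
    (b : ι → ℤ_[2]) {i₀ : ι} (hi₀ : IsUnit (b i₀)) :
    ∃ T : Finset ι, 2 ≤ #T ∧ IsSquare (∑ i ∈ T, b i ^ 2) := by
  have hs : ∀ i, toZModPow 3 (b i ^ 2) = 0 ∨ toZModPow 3 (b i ^ 2) = 1 ∨
      toZModPow 3 (b i ^ 2) = 4 := fun i => by
    by_cases hi : IsUnit (b i)
    · exact .inr (.inl (toZModPow_sq_eq_one_iff.2 hi))
    · rcases toZModPow_sq_of_not_isUnit hi with h | h
      exacts [.inl h, .inr (.inr h)]
  rcases ZMod.exists_sum_eq_one_of_mem_zero_one_four (by omega) _ hs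
    (toZModPow_sq_eq_one_iff.2 hi₀) with hall | ⟨T, hT, hsum⟩
  · obtain ⟨T, hT, hsq⟩ := exists_card_eq_four_isSquare_sum_sq hι b fun i =>
      toZModPow_sq_eq_one_iff.1 (hall i)
    exact ⟨T, by omega, hsq⟩
  · exact ⟨T, hT, isSquare_of_dvd_sub_one <|
      toZModPow_eq_iff_two_pow_dvd_sub.1 (by rw [map_sum, map_one]; exact hsum)⟩

theorem exists_isSquare_sum_sq {ι : Type*} [Fintype ι] (hι : 7 ≤ Fintype.card ι)
    (b : ι → ℤ_[2]) : ∃ T : Finset ι, 2 ≤ #T ∧ IsSquare (∑ i ∈ T, b i ^ 2) := by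
  classical
  obtain ⟨i₀⟩ : Nonempty ι := Fintype.card_pos_iff.1 (by omega)
  rcases eq_or_ne (b i₀) 0 with h0 | h0
  · have : Nontrivial ι := Fintype.one_lt_card_iff_nontrivial.1 (by omega)
    obtain ⟨j, hj⟩ := exists_ne i₀
    refine ⟨{i₀, j}, (card_pair hj.symm).ge, ?_⟩
    rw [sum_pair hj.symm, h0]
    simpa using IsSquare.sq (b j)
  induction hv : (b i₀).valuation using Nat.strong_induction_on generalizing b with
  | _ n ih =>
  by_cases hunit : ∃ i, IsUnit (b i)
  · obtain ⟨i, hi⟩ := hunit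
    exact exists_isSquare_sum_sq_of_isUnit hι b hi
  choose c hc using fun i => (isUnit_or_dvd (b i)).resolve_left fun h => hunit ⟨i, h⟩
  have hc0 : c i₀ ≠ 0 := fun h => h0 (by rw [hc, h, mul_zero])
  have hlt : (c i₀).valuation < n := by
    rw [← hv, hc, valuation_mul (by simp) hc0, valuation_p]
    omega
  obtain ⟨T, hT, r, hr⟩ := ih _ hlt c hc0 rfl
  refine ⟨T, hT, 2 * r, ?_⟩
  simp_rw [hc, mul_pow, ← mul_sum, hr]
  push_cast
  ring

end PadicInt

theorem isSumOfSquaresIn_totallyRealIntegers_six_of_seven {x : ℚ_[2]}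
    (hx : IsSumOfSquaresIn (totallyRealIntegers ℚ_[2]) 7 x) :
    IsSumOfSquaresIn (totallyRealIntegers ℚ_[2]) 6 x := by
  obtain ⟨f, hf, rfl⟩ := hx
  choose b hb using fun i => PadicInt.exists_coe_eq_of_isIntegral (hf i).2
  obtain ⟨T, hT, r, hr⟩ := PadicInt.exists_isSquare_sum_sq (by simp) b
  have hTr : ∑ i ∈ T, f i ^ 2 = (r : ℚ_[2]) ^ 2 := by
    simpa [← hb, sq] using congrArg ((↑) : ℤ_[2] → ℚ_[2]) hr
  have hrO := mem_totallyRealIntegers_of_sq_eq_sum_sq T (fun i _ => hf i) hTr.symm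
  rw [← sum_add_sum_compl T, hTr]
  refine ((IsSumOfSquaresIn.sq hrO).add (.finset_sum Tᶜ fun i _ => hf i)).mono
    zero_mem_totallyRealIntegers ?_
  rw [card_compl, Fintype.card_fin]
  omega

theorem isSumOfSquaresIn_totallyRealIntegers_four_seven :
    IsSumOfSquaresIn (totallyRealIntegers ℚ_[2]) 4 7 :=
  ⟨fun i => ((![2, 1, 1, 1] i : ℕ) : ℚ_[2]), fun _ => natCast_mem_totallyRealIntegers _, by
    simp [Fin.sum_univ_four]; norm_num⟩

theorem not_isSumOfSquaresIn_totallyRealIntegers_three_seven :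
    ¬IsSumOfSquaresIn (totallyRealIntegers ℚ_[2]) 3 7 := by
  rintro ⟨f, hf, h⟩
  choose b hb using fun i => PadicInt.exists_coe_eq_of_isIntegral (hf i).2
  apply PadicInt.sum_three_sq_ne_seven (b 0) (b 1) (b 2)
  rw [Fin.sum_univ_three, ← hb, ← hb, ← hb] at h
  exact PadicInt.ext (by simpa using h.symm.trans (PadicInt.coe_natCast 7).symm)

/-- Let `O` be the ring of integers of the maximal totally real subfield of
`ℚ₂`, i.e. the set of totally real algebraic integers in `ℚ₂`. Then every sum
of seven squares in `O` is a sum of six squares in `O`, and `4 ≤ P(O) ≤ 6`. -/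
theorem pythagoras_bounds_for_totally_real_integers_of_Qp2 :
    (∀ x : ℚ_[2], IsSumOfSquaresIn {y : ℚ_[2] | TotallyReal y ∧ IsIntegral ℤ y} 7 x →
      IsSumOfSquaresIn {y : ℚ_[2] | TotallyReal y ∧ IsIntegral ℤ y} 6 x) ∧
    4 ≤ pythagorasNumberOf {y : ℚ_[2] | TotallyReal y ∧ IsIntegral ℤ y} ∧
    pythagorasNumberOf {y : ℚ_[2] | TotallyReal y ∧ IsIntegral ℤ y} ≤ 6 := by
  have h0 := zero_mem_totallyRealIntegers (A := ℚ_[2])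
  refine ⟨fun _ => isSumOfSquaresIn_totallyRealIntegers_six_of_seven, le_sInf ?_,
    sInf_le ⟨6, fun _ => ⟨(·.mono h0 (by norm_num)),
      isSumOfSquaresIn_totallyRealIntegers_six_of_seven⟩, rfl⟩⟩
  rintro _ ⟨n, hn, rfl⟩
  by_contra! hlt
  have hn3 : n ≤ 3 := Nat.lt_succ_iff.1 (by exact_mod_cast hlt)
  exact not_isSumOfSquaresIn_totallyRealIntegers_three_seven
    ((isSumOfSquaresIn_totallyRealIntegers_four_seven.of_stable hn (by omega)).mono h0 hn3)
end
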